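/- For every integer n ≥ 2, every v ∈ V_{n-1}, and every τ > 0, there exists ρ > 0 such that the following holds: for every u ∈ ℂⁿ⁻¹ with Θ(u) = v and every û ∈ ℂⁿ⁻¹ with Θ(û) ∈ V_{n-1} and ‖û − u‖ < ρ, one has {z ∈ ℂ : |p_û(z)| < 1} ⊆ {z ∈ ℂ : |p_u(z)| < 2}, and for all z, z' ∈ {w ∈ ℂ : |p_u(w)| < 2} with |z − z'| < ρ one has |p_u(z) − p_û(z')| < τ. -/

import Mathlib

/-!
Put `Ψ(u, z) = (Θ(u), p_u(z))`. Since `p_{tu}(tz) = tⁿ p_u(z)`, the map `Ψ` is homogeneous of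
degree `n`, and `Ψ(u, z) = 0` forces `(u, z) = 0`: a polynomial all of whose critical points are
roots has only one distinct root, and `0` is a root of `p_u`. A continuous homogeneous map with
trivial zero set is proper, so `K = {(u, z) : ‖Θ(u)‖ ≤ 2, |p_u(z)| ≤ 2}` is compact, and both
claims follow from the uniform continuity of `(u, z) ↦ p_u(z)` at `K` for the tolerance
`min τ 1`.
-/

open Polynomial

/-- The formal antiderivative (with zero constant term) of a complex polynomial. -/
noncomputable def polyAntideriv (q : Polynomial ℂ) : Polynomial ℂ :=
  q.sum fun k a => Polynomial.C (a / ((k : ℂ) + 1)) * Polynomial.X ^ (k + 1)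

/-- For `u ∈ ℂᵐ`, `criticalPoly u` is the unique monic polynomial `p` of degree `m + 1`
with `p(0) = 0` and `p' = (m + 1)·∏ᵢ (X − uᵢ)`; its critical points are prescribed by `u`. -/
noncomputable def criticalPoly {m : ℕ} (u : Fin m → ℂ) : Polynomial ℂ :=
  polyAntideriv (Polynomial.C ((m : ℂ) + 1) * ∏ i, (Polynomial.X - Polynomial.C (u i)))

/-- The map `Θ` sending a list of prescribed critical points to the corresponding list of
critical values. -/
noncomputable def Theta {m : ℕ} (u : Fin m → ℂ) : Fin m → ℂ :=
  fun i => (criticalPoly u).eval (u i)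

/-- `V_m`: the set of `v ∈ ℂᵐ` with `0 ≤ |v 0| ≤ ⋯ ≤ |v (m-1)| < 1`. -/
def Vset (m : ℕ) : Set (Fin m → ℂ) :=
  {v | (Monotone fun i => ‖v i‖) ∧ ∀ i, ‖v i‖ < 1}


namespace Polynomial

theorem card_roots_toFinset_le_one_of_isRoot_derivative {K : Type*} [Field K] [IsAlgClosed K]
    [CharZero K] [DecidableEq K] {p : K[X]} (h : ∀ x, p.derivative.IsRoot x → p.IsRoot x) :
    p.roots.toFinset.card ≤ 1 := by
  rcases eq_or_ne p 0 with rfl | hp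
  · simp
  have hmult : ∀ c ∈ p.roots.toFinset, p.roots.count c = p.derivative.roots.count c + 1 := by
    intro c hc
    have hc : p.IsRoot c := (mem_roots hp).1 (Multiset.mem_toFinset.1 hc)
    rw [count_roots, count_roots, derivative_rootMultiplicity_of_root hc]
    have := (rootMultiplicity_pos hp).2 hc
    omega
  have hsub : p.derivative.roots.toFinset ⊆ p.roots.toFinset := by
    intro x hx
    rw [Multiset.mem_toFinset] at hx ⊢
    exact (mem_roots hp).2 (h x (isRoot_of_mem_roots hx))
  have hcount : p.roots.toFinset.card + p.derivative.natDegree ≤ p.natDegree := by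
    calc p.roots.toFinset.card + p.derivative.natDegree
        = p.roots.toFinset.card +
            ∑ c ∈ p.derivative.roots.toFinset, p.derivative.roots.count c := by
          rw [Multiset.toFinset_sum_count_eq, IsAlgClosed.card_roots_eq_natDegree]
      _ ≤ p.roots.toFinset.card + ∑ c ∈ p.roots.toFinset, p.derivative.roots.count c := by
          gcongr
      _ = ∑ c ∈ p.roots.toFinset, p.roots.count c := by
          rw [Finset.sum_congr rfl hmult, Finset.sum_add_distrib, Finset.sum_const,
            smul_eq_mul, mul_one, add_comm]
      _ = p.natDegree := by
          rw [Multiset.toFinset_sum_count_eq, IsAlgClosed.card_roots_eq_natDegree]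
  have hle : p.roots.toFinset.card ≤ p.natDegree :=
    (Multiset.toFinset_card_le _).trans (card_roots' p)
  rw [natDegree_derivative] at hcount
  omega

theorem eq_of_derivative_eq {R : Type*} [CommRing R] [IsAddTorsionFree R] {p q : R[X]}
    (hder : p.derivative = q.derivative) (h0 : p.eval 0 = q.eval 0) : p = q := by
  have h := eq_C_of_derivative_eq_zero (p := p - q) (by rw [derivative_sub, hder, sub_self])
  rwa [coeff_sub, coeff_zero_eq_eval_zero, coeff_zero_eq_eval_zero, h0, sub_self, map_zero,
    sub_eq_zero] at h

variable {X R : Type*} [TopologicalSpace X] [CommSemiring R] [TopologicalSpace R]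
  [IsTopologicalSemiring R]

theorem continuous_coeff_prod {ι : Type*} (s : Finset ι) {F : ι → X → R[X]}
    (hF : ∀ i ∈ s, ∀ k, Continuous fun x => (F i x).coeff k) (k : ℕ) :
    Continuous fun x => (∏ i ∈ s, F i x).coeff k := by
  classical
  induction s using Finset.induction_on generalizing k with
  | empty => simpa using continuous_const
  | insert j s hj ih =>
    simp only [Finset.prod_insert hj, coeff_mul]
    refine continuous_finsetSum _ fun ab _ => ?_
    exact (hF j (Finset.mem_insert_self j s) _).mul
      (ih (fun i hi => hF i (Finset.mem_insert_of_mem hi)) _)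

theorem continuous_eval_of_continuous_coeff {F : X → R[X]} {N : ℕ}
    (hdeg : ∀ x, (F x).natDegree < N) (hF : ∀ k, Continuous fun x => (F x).coeff k) :
    Continuous fun y : X × R => (F y.1).eval y.2 := by
  simp_rw [fun y : X × R => eval_eq_sum_range' (hdeg y.1) y.2]
  exact continuous_finsetSum _ fun k _ =>
    ((hF k).comp continuous_fst).mul (continuous_snd.pow k)

end Polynomial

section Homogeneous

variable {E F : Type*} [NormedAddCommGroup E] [NormedSpace ℝ E] [ProperSpace E]
  [NormedAddCommGroup F] [NormedSpace ℝ F] {f : E → F} {d : ℕ}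

theorem exists_pos_mul_pow_norm_le_norm_of_homogeneous (hd : 0 < d) (hf : Continuous f)
    (hhom : ∀ t : ℝ, 0 < t → ∀ x, f (t • x) = t ^ d • f x) (hzero : ∀ x, f x = 0 → x = 0) :
    ∃ ε > 0, ∀ x, ε * ‖x‖ ^ d ≤ ‖f x‖ := by
  rcases subsingleton_or_nontrivial E with hE | hE
  · refine ⟨1, one_pos, fun x => ?_⟩
    simp [Subsingleton.elim x 0, zero_pow hd.ne']
  obtain ⟨y₀, hy₀, hmin⟩ := (isCompact_sphere (0 : E) 1).exists_isMinOn
    (NormedSpace.sphere_nonempty.2 zero_le_one) hf.norm.continuousOn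
  have hy₀ne : y₀ ≠ 0 := ne_zero_of_mem_unit_sphere ⟨y₀, hy₀⟩
  refine ⟨‖f y₀‖, norm_pos_iff.2 fun h => hy₀ne (hzero y₀ h), fun x => ?_⟩
  rcases eq_or_ne x 0 with rfl | hx
  · simp [zero_pow hd.ne']
  have hxpos : 0 < ‖x‖ := norm_pos_iff.2 hx
  have hunit : ‖x‖⁻¹ • x ∈ Metric.sphere (0 : E) 1 := by
    rw [mem_sphere_zero_iff_norm, norm_smul, norm_inv, norm_norm, inv_mul_cancel₀ hxpos.ne']
  calc ‖f y₀‖ * ‖x‖ ^ d ≤ ‖f (‖x‖⁻¹ • x)‖ * ‖x‖ ^ d := by gcongr; exact hmin hunit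
    _ = ‖f x‖ := by
      conv_rhs => rw [← smul_inv_smul₀ hxpos.ne' x, hhom ‖x‖ hxpos, norm_smul]
      rw [norm_pow, norm_norm, mul_comm]

theorem isCompact_preimage_closedBall_of_homogeneous (hd : 0 < d) (hf : Continuous f)
    (hhom : ∀ t : ℝ, 0 < t → ∀ x, f (t • x) = t ^ d • f x) (hzero : ∀ x, f x = 0 → x = 0)
    (R : ℝ) : IsCompact (f ⁻¹' Metric.closedBall 0 R) := by
  obtain ⟨ε, hε, hlow⟩ := exists_pos_mul_pow_norm_le_norm_of_homogeneous hd hf hhom hzero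
  refine Metric.isCompact_of_isClosed_isBounded (Metric.isClosed_closedBall.preimage hf)
    (isBounded_iff_forall_norm_le.2 ⟨max 1 (R / ε), fun x hx => ?_⟩)
  rw [Set.mem_preimage, mem_closedBall_zero_iff] at hx
  rcases le_total ‖x‖ 1 with hx1 | hx1
  · exact hx1.trans (le_max_left _ _)
  calc ‖x‖ ≤ ‖x‖ ^ d := le_self_pow₀ hx1 hd.ne'
    _ ≤ R / ε := by rw [le_div_iff₀' hε]; exact (hlow x).trans hx
    _ ≤ max 1 (R / ε) := le_max_right _ _

end Homogeneous

theorem IsCompact.exists_forall_dist_lt {α β : Type*} [PseudoMetricSpace α] [PseudoMetricSpace β]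
    {s : Set α} (hs : IsCompact s) {f : α → β} (hf : Continuous f) {ε : ℝ} (hε : 0 < ε) :
    ∃ δ > 0, ∀ x ∈ s, ∀ y, dist x y < δ → dist (f x) (f y) < ε := by
  obtain ⟨δ, hδ, h⟩ := Metric.mem_uniformity_dist.1 <|
    hs.uniformContinuousAt_of_continuousAt f (fun a _ => hf.continuousAt)
      (Metric.dist_mem_uniformity hε)
  exact ⟨δ, hδ, fun x hx y hxy => h hxy hx⟩

theorem coeff_polyAntideriv_zero (q : ℂ[X]) : (polyAntideriv q).coeff 0 = 0 := by
  simp [polyAntideriv, Polynomial.sum_def, coeff_X_pow]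

theorem coeff_polyAntideriv_succ (q : ℂ[X]) (k : ℕ) :
    (polyAntideriv q).coeff (k + 1) = q.coeff k / (k + 1) := by
  simp +contextual [polyAntideriv, Polynomial.sum_def, coeff_X_pow]

theorem derivative_polyAntideriv (q : ℂ[X]) : derivative (polyAntideriv q) = q := by
  ext k
  rw [coeff_derivative, coeff_polyAntideriv_succ, div_mul_cancel₀]
  exact_mod_cast k.succ_ne_zero

section CriticalPoly

variable {m : ℕ} (u : Fin m → ℂ)

theorem derivative_criticalPoly :
    derivative (criticalPoly u) = C ((m : ℂ) + 1) * ∏ i, (X - C (u i)) :=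
  derivative_polyAntideriv _

theorem criticalPoly_eval_zero : (criticalPoly u).eval 0 = 0 := by
  rw [← coeff_zero_eq_eval_zero]
  exact coeff_polyAntideriv_zero _

theorem natDegree_criticalPoly_lt : (criticalPoly u).natDegree < m + 2 := by
  have h := congrArg natDegree (derivative_criticalPoly u)
  rw [natDegree_derivative, natDegree_C_mul (by exact_mod_cast m.succ_ne_zero),
    natDegree_finsetProd_X_sub_C_eq_card, Finset.card_univ, Fintype.card_fin] at h
  omega

theorem coeff_criticalPoly_succ (k : ℕ) :
    (criticalPoly u).coeff (k + 1) = ((m : ℂ) + 1) * (∏ i, (X - C (u i))).coeff k / (k + 1) := by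
  rw [criticalPoly, coeff_polyAntideriv_succ, coeff_C_mul]

theorem continuous_criticalPoly_eval :
    Continuous fun x : (Fin m → ℂ) × ℂ => (criticalPoly x.1).eval x.2 := by
  refine continuous_eval_of_continuous_coeff natDegree_criticalPoly_lt fun k => ?_
  cases k with
  | zero => simpa [coeff_zero_eq_eval_zero, criticalPoly_eval_zero] using continuous_const
  | succ k =>
    simp_rw [coeff_criticalPoly_succ]
    refine (continuous_const.mul (continuous_coeff_prod _ (fun i _ j => ?_) k)).div_const _
    simp only [coeff_sub, coeff_X, coeff_C]
    split_ifs <;> fun_prop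

theorem criticalPoly_smul_comp (t : ℂ) :
    (criticalPoly (t • u)).comp (C t * X) = C (t ^ (m + 1)) * criticalPoly u := by
  refine eq_of_derivative_eq ?_ (by simp [eval_comp, criticalPoly_eval_zero])
  have hfactor : ∀ i, C t * X - C ((t • u) i) = C t * (X - C (u i)) := fun i => by
    rw [Pi.smul_apply, smul_eq_mul, C_mul]; ring
  rw [derivative_comp, derivative_C_mul, derivative_C_mul, derivative_criticalPoly,
    derivative_criticalPoly, derivative_X, mul_comp, prod_comp]
  simp only [sub_comp, X_comp, C_comp, hfactor, Finset.prod_mul_distrib, Finset.prod_const,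
    Finset.card_univ, Fintype.card_fin, map_pow]
  ring

theorem criticalPoly_smul_eval (t z : ℂ) :
    (criticalPoly (t • u)).eval (t * z) = t ^ (m + 1) * (criticalPoly u).eval z := by
  simpa [eval_comp] using congrArg (eval z) (criticalPoly_smul_comp u t)

theorem eq_zero_of_theta_eq_zero_of_eval_eq_zero {z : ℂ} (hu : Theta u = 0)
    (hz : (criticalPoly u).eval z = 0) : z = 0 := by
  classical
  have hcrit : ∀ x, (criticalPoly u).derivative.IsRoot x → (criticalPoly u).IsRoot x := by
    intro x hx
    simp only [IsRoot, derivative_criticalPoly, eval_mul, eval_C, eval_prod, eval_sub, eval_X,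
      mul_eq_zero, Finset.prod_eq_zero_iff, sub_eq_zero] at hx
    obtain ⟨i, -, rfl⟩ := hx.resolve_left (by exact_mod_cast m.succ_ne_zero)
    exact congrFun hu i
  have hp : criticalPoly u ≠ 0 := by
    intro hzero
    have := derivative_criticalPoly u
    rw [hzero, derivative_zero, eq_comm, mul_eq_zero, C_eq_zero] at this
    exact this.elim (by exact_mod_cast m.succ_ne_zero)
      (monic_prod_of_monic _ _ fun i _ => monic_X_sub_C (u i)).ne_zero
  have hroot : ∀ x, (criticalPoly u).IsRoot x → x ∈ (criticalPoly u).roots.toFinset := fun x hx =>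
    Multiset.mem_toFinset.2 ((mem_roots hp).2 hx)
  exact Finset.card_le_one.1 (card_roots_toFinset_le_one_of_isRoot_derivative hcrit) _
    (hroot z hz) _ (hroot 0 (criticalPoly_eval_zero u))

end CriticalPoly

theorem theta_smul {m : ℕ} (t : ℂ) (u : Fin m → ℂ) : Theta (t • u) = t ^ (m + 1) • Theta u :=
  funext fun i => criticalPoly_smul_eval u t (u i)

noncomputable def criticalData {m : ℕ} (x : (Fin m → ℂ) × ℂ) : (Fin m → ℂ) × ℂ :=
  (Theta x.1, (criticalPoly x.1).eval x.2)

section CriticalData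

variable {m : ℕ}

theorem continuous_criticalData : Continuous (criticalData (m := m)) :=
  (continuous_pi fun i => continuous_criticalPoly_eval.comp
    (continuous_fst.prodMk ((continuous_apply i).comp continuous_fst))).prodMk
    continuous_criticalPoly_eval

theorem criticalData_real_smul (t : ℝ) (x : (Fin m → ℂ) × ℂ) :
    criticalData (t • x) = t ^ (m + 1) • criticalData x := by
  have hx : t • x = ((t : ℂ) • x.1, (t : ℂ) * x.2) := by
    ext <;> simp [Complex.real_smul]
  rw [hx, criticalData, criticalData, theta_smul, criticalPoly_smul_eval]
  ext <;> simp [Complex.real_smul]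

theorem eq_zero_of_criticalData_eq_zero {x : (Fin m → ℂ) × ℂ} (hx : criticalData x = 0) :
    x = 0 := by
  obtain ⟨hθ, hz⟩ := Prod.mk_eq_zero.1 hx
  exact Prod.ext
    (funext fun i => eq_zero_of_theta_eq_zero_of_eval_eq_zero x.1 hθ (congrFun hθ i))
    (eq_zero_of_theta_eq_zero_of_eval_eq_zero x.1 hθ hz)

theorem isCompact_preimage_criticalData_closedBall (R : ℝ) :
    IsCompact (criticalData (m := m) ⁻¹' Metric.closedBall 0 R) :=
  isCompact_preimage_closedBall_of_homogeneous m.succ_pos continuous_criticalData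
    (fun t _ x => criticalData_real_smul t x) (fun _ => eq_zero_of_criticalData_eq_zero) R

end CriticalData

theorem norm_le_one_of_mem_Vset {m : ℕ} {v : Fin m → ℂ} (hv : v ∈ Vset m) : ‖v‖ ≤ 1 :=
  pi_norm_le_iff_of_nonneg zero_le_one |>.2 fun i => (hv.2 i).le

theorem criticalPoly_close_of_critical_points_close_general
    (n : ℕ) (v : Fin (n - 1) → ℂ) (hv : v ∈ Vset (n - 1))
    (τ : ℝ) (hτ : 0 < τ) :
    ∃ ρ > 0, ∀ u : Fin (n - 1) → ℂ, Theta u = v →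
      ∀ uh : Fin (n - 1) → ℂ, Theta uh ∈ Vset (n - 1) → ‖uh - u‖ < ρ →
        ({z : ℂ | ‖(criticalPoly uh).eval z‖ < 1} ⊆
          {z : ℂ | ‖(criticalPoly u).eval z‖ < 2}) ∧
        ∀ z z' : ℂ, ‖(criticalPoly u).eval z‖ < 2 →
          ‖(criticalPoly u).eval z'‖ < 2 → ‖z - z'‖ < ρ →
            ‖(criticalPoly u).eval z - (criticalPoly uh).eval z'‖ < τ := by
  obtain ⟨ρ, hρ, hclose⟩ :=
    (isCompact_preimage_criticalData_closedBall (m := n - 1) 2).exists_forall_dist_lt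
      continuous_criticalPoly_eval (lt_min hτ one_pos)
  have hmem : ∀ {u z}, Theta u ∈ Vset (n - 1) → ‖(criticalPoly u).eval z‖ < 2 →
      (u, z) ∈ criticalData ⁻¹' Metric.closedBall 0 2 := fun hu hz => by
    simp only [Set.mem_preimage, mem_closedBall_zero_iff, criticalData, Prod.norm_def, max_le_iff]
    exact ⟨(norm_le_one_of_mem_Vset hu).trans one_le_two, hz.le⟩
  refine ⟨ρ, hρ, fun u hu uh huh hdist => ⟨fun z hz => ?_, fun z z' hz _ hzz' => ?_⟩⟩
  · have h := hclose (uh, z) (hmem huh (hz.trans one_lt_two)) (u, z)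
      (by simpa [Prod.dist_eq, dist_eq_norm] using hdist)
    rw [dist_eq_norm] at h
    calc ‖(criticalPoly u).eval z‖
        ≤ ‖(criticalPoly uh).eval z‖ + ‖(criticalPoly uh).eval z - (criticalPoly u).eval z‖ :=
          norm_le_norm_add_norm_sub _ _
      _ < 1 + 1 := add_lt_add (by exact hz) (h.trans_le (min_le_right _ _))
      _ = 2 := one_add_one_eq_two
  · have h := hclose (u, z) (hmem (hu ▸ hv) hz) (uh, z') <| by
      rw [Prod.dist_eq, dist_eq_norm, dist_eq_norm, norm_sub_rev]
      exact max_lt hdist hzz'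
    rw [dist_eq_norm] at h
    exact h.trans_le (min_le_left _ _)

/-- If `û` is close to some `u ∈ Θ⁻¹(v)` (with `Θ(û)` also in `V_{n-1}`), then `p_û` is
uniformly close to `p_u`: the tract `{|p_û| < 1}` is contained in `{|p_u| < 2}`, and
`|p_u(z) − p_û(z')| < τ` whenever `z, z' ∈ {|p_u| < 2}` are within `ρ` of each other. -/
theorem criticalPoly_close_of_critical_points_close
    (n : ℕ) (hn : 2 ≤ n) (v : Fin (n - 1) → ℂ) (hv : v ∈ Vset (n - 1))
    (τ : ℝ) (hτ : 0 < τ) :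
    ∃ ρ > 0, ∀ u : Fin (n - 1) → ℂ, Theta u = v →
      ∀ uh : Fin (n - 1) → ℂ, Theta uh ∈ Vset (n - 1) → ‖uh - u‖ < ρ →
        ({z : ℂ | ‖(criticalPoly uh).eval z‖ < 1} ⊆
          {z : ℂ | ‖(criticalPoly u).eval z‖ < 2}) ∧
        ∀ z z' : ℂ, ‖(criticalPoly u).eval z‖ < 2 →
          ‖(criticalPoly u).eval z'‖ < 2 → ‖z - z'‖ < ρ →
            ‖(criticalPoly u).eval z - (criticalPoly uh).eval z'‖ < τ :=
  criticalPoly_close_of_critical_points_close_general n v hv τ hτ
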